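/- Let φ : F → G be a surjective group morphism with kernel N and F̂ the pullback of the universal covering groupoid of G along φ. The map e : F → F̂^totab given by composing u ↦ (u,1) with the universal abelianisation map is a φ-derivation, and the induced G-module morphism η : D_φ → F̂^totab from the derived module of φ is an isomorphism. -/

import Mathlib

open CategoryTheory MulOpposite

universe u v

variable {F : Type u} {G : Type v} [Group F] [Group G]

/-- The pullback `F̂` of the universal covering groupoid of `G` along `φ : F → G`:
objects the elements of `G`, morphisms the pairs `(u, g) : φ(u)g → g` with `u ∈ F`,
`g ∈ G`, composition `(u, φ(v)g)(v, g) = (uv, g)`. -/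
def PullbackCover (φ : F →* G) : Type v := G

instance (φ : F →* G) : Groupoid (PullbackCover φ) where
  Hom a b := { u : F // φ u * (show G from b) = show G from a }
  id a := ⟨1, (congrArg (· * (show G from a)) (map_one φ)).trans (one_mul _)⟩
  comp {a b c} f g := ⟨f.1 * g.1, by
    have hf := f.2; have hg := g.2
    rw [map_mul, mul_assoc, hg, hf]⟩
  id_comp f := by apply Subtype.ext; simp
  comp_id f := by apply Subtype.ext; simp
  assoc f g h := by apply Subtype.ext; simp [mul_assoc]
  inv {a b} f := ⟨f.1⁻¹, by
    have h := f.2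
    have h2 : (φ f.1)⁻¹ * (φ f.1 * (show G from b)) = show G from b :=
      inv_mul_cancel_left _ _
    rw [h, ← map_inv] at h2
    exact h2⟩
  inv_comp f := by apply Subtype.ext; simp
  comp_inv f := by apply Subtype.ext; simp

/-- A group regarded as a one-object groupoid (with `f ≫ g = f * g`,
following the composition convention of the paper). -/
def GroupAsGroupoid (A : Type*) : Type := Unit

instance (A : Type*) [Group A] : Groupoid (GroupAsGroupoid A) where
  Hom _ _ := A
  id _ := (1 : A)
  comp f g := f * g
  id_comp := one_mul
  comp_id := mul_one
  assoc := mul_assoc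
  inv f := f⁻¹
  inv_comp := inv_mul_cancel
  comp_inv := mul_inv_cancel

/-- A morphism in `GroupAsGroupoid A`, regarded as an element of the group `A`. -/
def toGrp {A : Type*} [Group A] {a b : GroupAsGroupoid A} (f : a ⟶ b) : A := f

def IsPhiDerivation {F G M : Type*} [Group F] [Group G] [AddCommGroup M]
    [DistribMulAction Gᵐᵒᵖ M] (φ : F →* G) (d : F → M) : Prop :=
  ∀ u v : F, d (u * v) = op (φ v) • d u + d v

variable (φ : F →* G)

/-- The morphism `(u, 1) : φ(u)·1 ⟶ 1` of `F̂`. -/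
def duMor (u : F) :
    (show PullbackCover φ from (φ u * 1 : G)) ⟶ (show PullbackCover φ from (1 : G)) :=
  ⟨u, rfl⟩

/-- The right action of `k ∈ G` on morphisms of `F̂`: `(u, g)^k = (u, gk)`. -/
def actMor (k : G) {a b : PullbackCover φ} (f : a ⟶ b) :
    (show PullbackCover φ from ((show G from a) * k : G)) ⟶
      (show PullbackCover φ from ((show G from b) * k : G)) :=
  ⟨f.1, by
    have h := f.2
    rw [← mul_assoc, h]⟩

/-! Both `η` and its inverse come from universal properties: `η` from that of `D_φ` applied to
`e`, the inverse from that of `F̂^totab` applied to the functor `(u, g) ↦ ∂(u)^g` into `D_φ`,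
which is a functor because `∂` is a `φ`-derivation. The two composites are identities by the
uniqueness halves of the same universal properties, since `D_φ` is generated as a `G`-module by
the `∂ u`, and every morphism `(u, g) = (u, 1)^g` of `F̂` is a translate of some `(u, 1)`. -/

universe w

def IsLiftThrough {C : Type*} [Category C] {T A : Type*} [Group T] [Group A]
    (υ : C ⥤ GroupAsGroupoid T) (Φ : C ⥤ GroupAsGroupoid A) (f : T →* A) : Prop :=
  ∀ {a b : C} (m : a ⟶ b), toGrp (Φ.map m) = f (toGrp (υ.map m))

def IsUniversalAbelianisation {C : Type*} [Category C] {T : Type w} [CommGroup T]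
    (υ : C ⥤ GroupAsGroupoid T) : Prop :=
  ∀ (A : Type w) (_ : CommGroup A) (Φ : C ⥤ GroupAsGroupoid A), ∃! f : T →* A, IsLiftThrough υ Φ f

def IsDerivedModule {D : Type w} [AddCommGroup D] [DistribMulAction Gᵐᵒᵖ D] (dd : F → D) :
    Prop :=
  ∀ (M : Type w) [AddCommGroup M] [DistribMulAction Gᵐᵒᵖ M] (d : F → M),
    IsPhiDerivation φ d →
    ∃! d' : D →+ M, (∀ (g : G) (x : D), d' (op g • x) = op g • d' x) ∧
      ∀ u : F, d' (dd u) = d u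

def GroupAsGroupoid.map {A B : Type*} [Group A] [Group B] (f : A →* B) :
    GroupAsGroupoid A ⥤ GroupAsGroupoid B where
  obj _ := ()
  map m := (f (toGrp m) : B)
  map_id _ := f.map_one
  map_comp _ _ := f.map_mul _ _

theorem IsUniversalAbelianisation.hom_ext {C : Type*} [Category C] {T : Type w} [CommGroup T]
    {υ : C ⥤ GroupAsGroupoid T} (huniv : IsUniversalAbelianisation υ) {A : Type w}
    [CommGroup A] {f₁ f₂ : T →* A}
    (h : ∀ {a b : C} (m : a ⟶ b), f₁ (toGrp (υ.map m)) = f₂ (toGrp (υ.map m))) : f₁ = f₂ :=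
  (huniv A _ (υ ⋙ GroupAsGroupoid.map f₁)).unique (fun _ => rfl) h

section Derivations

variable {M : Type*} [AddCommGroup M] [DistribMulAction Gᵐᵒᵖ M] {d : F → M}

theorem IsPhiDerivation.map_one (hd : IsPhiDerivation φ d) : d 1 = 0 := by
  simpa using hd 1 1

theorem IsPhiDerivation.comp_equivariant {N : Type*} [AddCommGroup N] [DistribMulAction Gᵐᵒᵖ N]
    (hd : IsPhiDerivation φ d) (f : M →+ N) (hf : ∀ (g : G) (x : M), f (op g • x) = op g • f x) :
    IsPhiDerivation φ (f ∘ d) := fun u v => by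
  simp only [Function.comp_apply, hd u v, map_add, hf]

theorem IsDerivedModule.hom_ext {D : Type w} [AddCommGroup D] [DistribMulAction Gᵐᵒᵖ D]
    {dd : F → D} (hD : IsDerivedModule φ dd) (hdd : IsPhiDerivation φ dd) {N : Type w}
    [AddCommGroup N] [DistribMulAction Gᵐᵒᵖ N] {f₁ f₂ : D →+ N}
    (hf₁ : ∀ (g : G) (x : D), f₁ (op g • x) = op g • f₁ x)
    (hf₂ : ∀ (g : G) (x : D), f₂ (op g • x) = op g • f₂ x)
    (h : ∀ u : F, f₁ (dd u) = f₂ (dd u)) : f₁ = f₂ :=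
  (hD N _ (hdd.comp_equivariant φ f₂ hf₂)).unique ⟨hf₁, h⟩ ⟨hf₂, fun _ => rfl⟩

def derivationFunctor (hd : IsPhiDerivation φ d) :
    PullbackCover φ ⥤ GroupAsGroupoid (Multiplicative M) where
  obj _ := ()
  map {_ b} m := Multiplicative.ofAdd (op (show G from b) • d m.1)
  map_id _ := by
    change Multiplicative.ofAdd (_ • d 1) = 1
    rw [hd.map_one, smul_zero, ofAdd_zero]
  map_comp {_ b c} m m' := by
    change Multiplicative.ofAdd (_ • d (m.1 * m'.1)) =
      Multiplicative.ofAdd (_ • d m.1) * Multiplicative.ofAdd (_ • d m'.1)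
    rw [← ofAdd_add, hd, smul_add, ← mul_smul, ← op_mul, m'.2]

end Derivations

section Abelianisation

variable {A : Type*} [Group A] (υ : PullbackCover φ ⥤ GroupAsGroupoid A)

theorem toGrp_map_congr {a a' b b' : PullbackCover φ} (ha : a = a') (hb : b = b')
    (m : a ⟶ b) (m' : a' ⟶ b') (h : m.1 = m'.1) :
    toGrp (υ.map m) = toGrp (υ.map m') := by
  subst ha hb
  rw [Subtype.ext h]

def IsInducedAction (σ : G → A →* A) : Prop :=
  ∀ (k : G) {a b : PullbackCover φ} (m : a ⟶ b),
    toGrp (υ.map (actMor φ k m)) = σ k (toGrp (υ.map m))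

variable {υ} {σ : G → A →* A}

theorem toGrp_map_eq_apply_duMor
    (hσ : IsInducedAction φ υ σ)
    {a b : PullbackCover φ} (m : a ⟶ b) :
    toGrp (υ.map m) = σ (show G from b) (toGrp (υ.map (duMor φ m.1))) := by
  rw [← hσ]
  refine toGrp_map_congr φ υ ?_ ?_ _ _ rfl
  · change (show G from a) = φ m.1 * 1 * (show G from b)
    rw [mul_one, m.2]
  · exact (one_mul (show G from b)).symm

theorem toGrp_map_duMor_mul
    (hσ : IsInducedAction φ υ σ)
    (u v : F) :
    toGrp (υ.map (duMor φ (u * v))) =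
      σ (φ v) (toGrp (υ.map (duMor φ u))) * toGrp (υ.map (duMor φ v)) := by
  let m : (show PullbackCover φ from φ u * (φ v * 1)) ⟶ (show PullbackCover φ from φ v * 1) :=
    ⟨u, rfl⟩
  have hcomp : toGrp (υ.map (duMor φ (u * v))) = toGrp (υ.map (m ≫ duMor φ v)) :=
    toGrp_map_congr φ υ (by change φ (u * v) * 1 = φ u * (φ v * 1); simp) rfl _ _ rfl
  rw [hcomp, υ.map_comp]
  change toGrp (υ.map m) * _ = _
  rw [toGrp_map_eq_apply_duMor φ hσ m]
  exact congrArg (fun k ↦ σ k (toGrp (υ.map (duMor φ u))) * _) (mul_one (φ v))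

end Abelianisation

abbrev additiveOpAction {T : Type*} [Monoid T] (σ : G → T →* T) (hσ1 : σ 1 = MonoidHom.id T)
    (hσmul : ∀ g k : G, σ (g * k) = (σ k).comp (σ g)) :
    DistribMulAction Gᵐᵒᵖ (Additive T) :=
  DistribMulAction.compHom (Additive T)
    ({ toFun g := MonoidHom.toAdditive (σ g.unop)
       map_one' := by rw [unop_one, hσ1]; rfl
       map_mul' g k := by rw [unop_mul, hσmul]; rfl } : Gᵐᵒᵖ →* AddMonoid.End (Additive T))

section Comparison

variable {T : Type w} [CommGroup T] {υ : PullbackCover φ ⥤ GroupAsGroupoid T} {σ : G → T →* T}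
  {D : Type w} [AddCommGroup D] [DistribMulAction Gᵐᵒᵖ D] {dd : F → D}

theorem lift_derivationFunctor_apply_act (huniv : IsUniversalAbelianisation υ)
    (hσ : IsInducedAction φ υ σ)
    (hdd : IsPhiDerivation φ dd) {η₁ : T →* Multiplicative D}
    (hη₁ : IsLiftThrough υ (derivationFunctor φ hdd) η₁)
    (g : G) (t : T) :
    η₁ (σ g t) = Multiplicative.ofAdd (op g • (η₁ t).toAdd) := by
  suffices η₁.comp (σ g) =
      (DistribSMul.toAddMonoidHom D (op g)).toMultiplicative.comp η₁ from
    DFunLike.congr_fun this t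
  refine huniv.hom_ext fun {a b} m ↦ ?_
  change η₁ (σ g _) = Multiplicative.ofAdd (op g • (η₁ _).toAdd)
  rw [← hσ, ← hη₁, ← hη₁ m]
  change Multiplicative.ofAdd (op ((show G from b) * g) • dd m.1) =
    Multiplicative.ofAdd (op g • op (show G from b) • dd m.1)
  rw [op_mul, mul_smul]

theorem lift_derivationFunctor_comp_eq_id (hD : IsDerivedModule φ dd)
    (hdd : IsPhiDerivation φ dd) (huniv : IsUniversalAbelianisation υ)
    (hσ : IsInducedAction φ υ σ)
    {η₀ : D →+ Additive T}
    (hη₀act : ∀ (k : G) (x : D), η₀ (op k • x) = Additive.ofMul (σ k (η₀ x).toMul))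
    (hη₀e : ∀ u : F, η₀ (dd u) = Additive.ofMul (toGrp (υ.map (duMor φ u))))
    {η₁ : T →* Multiplicative D}
    (hη₁ : IsLiftThrough υ (derivationFunctor φ hdd) η₁) :
    η₁.toAdditiveLeft.comp η₀ = AddMonoidHom.id D := by
  refine hD.hom_ext φ hdd (fun k x ↦ ?_) (fun _ _ ↦ rfl) (fun u ↦ ?_)
  · change (η₁ (η₀ (op k • x)).toMul).toAdd = _
    rw [hη₀act, toMul_ofMul, lift_derivationFunctor_apply_act φ huniv hσ hdd hη₁, toAdd_ofAdd]
    rfl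
  · change (η₁ (η₀ (dd u)).toMul).toAdd = dd u
    rw [hη₀e, toMul_ofMul, ← hη₁]
    exact one_smul Gᵐᵒᵖ (dd u)

theorem comp_lift_derivationFunctor_eq_id (huniv : IsUniversalAbelianisation υ)
    (hσ : IsInducedAction φ υ σ)
    (hdd : IsPhiDerivation φ dd) {η₀ : D →+ Additive T}
    (hη₀act : ∀ (k : G) (x : D), η₀ (op k • x) = Additive.ofMul (σ k (η₀ x).toMul))
    (hη₀e : ∀ u : F, η₀ (dd u) = Additive.ofMul (toGrp (υ.map (duMor φ u))))
    {η₁ : T →* Multiplicative D}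
    (hη₁ : IsLiftThrough υ (derivationFunctor φ hdd) η₁) :
    η₀.comp η₁.toAdditiveLeft = AddMonoidHom.id (Additive T) := by
  refine MonoidHom.toAdditive.symm.injective (huniv.hom_ext fun {a b} m ↦ ?_)
  change (η₀ (η₁ (toGrp (υ.map m))).toAdd).toMul = toGrp (υ.map m)
  rw [← hη₁]
  change (η₀ (op (show G from b) • dd m.1)).toMul = _
  rw [hη₀act, hη₀e, toMul_ofMul, toMul_ofMul, toGrp_map_eq_apply_duMor φ hσ m]

end Comparison

theorem stmt16
    -- (T, υ) is the universal abelianisation of F̂: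
    (T : Type (max u v)) [CommGroup T] (υ : PullbackCover φ ⥤ GroupAsGroupoid T)
    (huniv : ∀ (A : Type (max u v)) (_ : CommGroup A)
      (Φ : PullbackCover φ ⥤ GroupAsGroupoid A),
      ∃! f : T →* A, ∀ {a b : PullbackCover φ} (m : a ⟶ b),
        toGrp (Φ.map m) = f (toGrp (υ.map m)))
    -- σ is the G-module structure on F̂^totab induced by the action of G on F̂:
    (σ : G → T →* T) (hσ1 : σ 1 = MonoidHom.id T)
    (hσmul : ∀ g k : G, σ (g * k) = (σ k).comp (σ g))
    (hσ : ∀ (k : G) {a b : PullbackCover φ} (f : a ⟶ b),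
      toGrp (υ.map (actMor φ k f)) = σ k (toGrp (υ.map f)))
    -- (D, ∂) is the derived module of φ, i.e. the universal φ-derivation:
    (D : Type (max u v)) [AddCommGroup D] [DistribMulAction Gᵐᵒᵖ D]
    (dd : F → D) (hdd : IsPhiDerivation φ dd)
    (hDuniv : ∀ (M : Type (max u v)) [AddCommGroup M] [DistribMulAction Gᵐᵒᵖ M]
      (d : F → M), IsPhiDerivation φ d →
      ∃! d' : D →+ M, (∀ (g : G) (x : D), d' (op g • x) = op g • d' x) ∧
        ∀ u : F, d' (dd u) = d u) :
    -- e is a φ-derivation (written multiplicatively in T):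
    (∀ u v : F,
      toGrp (υ.map (duMor φ (u * v)))
        = σ (φ v) (toGrp (υ.map (duMor φ u))) * toGrp (υ.map (duMor φ v))) ∧
    -- and the induced G-morphism η : D_φ → F̂^totab is an isomorphism:
    ∃ η : D ≃+ Additive T,
      (∀ u : F, η (dd u) = Additive.ofMul (toGrp (υ.map (duMor φ u)))) ∧
      (∀ (k : G) (x : D),
        η (op k • x) = Additive.ofMul (σ k (Additive.toMul (η x)))) := by
  have he := toGrp_map_duMor_mul φ hσ
  let _ := additiveOpAction σ hσ1 hσmul
  obtain ⟨η₀, ⟨hη₀act, hη₀e⟩, -⟩ :=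
    hDuniv (Additive T) (fun u ↦ Additive.ofMul (toGrp (υ.map (duMor φ u)))) he
  obtain ⟨η₁, hη₁, -⟩ := huniv _ _ (derivationFunctor φ hdd)
  refine ⟨he, η₀.toAddEquiv η₁.toAdditiveLeft ?_ ?_, hη₀e, hη₀act⟩
  · exact lift_derivationFunctor_comp_eq_id φ hDuniv hdd huniv hσ hη₀act hη₀e hη₁
  · exact comp_lift_derivationFunctor_eq_id φ huniv hσ hdd hη₀act hη₀e hη₁
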